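/- For all even integers p, q ≥ 2, the direct (tensor) product of complete graphs satisfies χ_so(K_p × K_q) = min(p, q). -/

import Mathlib

/-- A strong odd coloring of a simple graph: a proper vertex coloring such that for every
vertex `v` and every color `c`, the number of neighbors of `v` colored `c` is zero or odd. -/
def SimpleGraph.IsStrongOddColoring {V α : Type*} (G : SimpleGraph V) (φ : V → α) : Prop :=
  (∀ ⦃u v⦄, G.Adj u v → φ u ≠ φ v) ∧
    ∀ v c, Nat.card {u // G.Adj v u ∧ φ u = c} = 0 ∨
      Odd (Nat.card {u // G.Adj v u ∧ φ u = c})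

/-- The strong odd chromatic number: the least `k` such that there is a strong odd
coloring using `k` colors. -/
noncomputable def SimpleGraph.strongOddChromaticNumber {V : Type*} (G : SimpleGraph V) : ℕ :=
  sInf {k | ∃ φ : V → Fin k, G.IsStrongOddColoring φ}

/-- The direct (tensor) product of two simple graphs. -/
def SimpleGraph.directProd {α β : Type*} (G : SimpleGraph α) (H : SimpleGraph β) :
    SimpleGraph (α × β) where
  Adj x y := G.Adj x.1 y.1 ∧ H.Adj x.2 y.2
  symm := ⟨by rintro x y ⟨h1, h2⟩; exact ⟨h1.symm, h2.symm⟩⟩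
  loopless := ⟨by rintro x ⟨h1, -⟩; exact G.ne_of_adj h1 rfl⟩

/-- A set in a grid whose pairs always agree in one coordinate has card ≤ max p q. -/
lemma fiber_card_le {p q : ℕ} (C : Finset (Fin p × Fin q))
    (h : ∀ a ∈ C, ∀ b ∈ C, a.1 = b.1 ∨ a.2 = b.2) : C.card ≤ max p q := by
  by_cases hrow : ∀ a ∈ C, ∀ b ∈ C, a.1 = b.1
  · calc C.card ≤ (Finset.univ : Finset (Fin q)).card := by
          apply Finset.card_le_card_of_injOn Prod.snd (fun _ _ => Finset.mem_univ _)
          intro a ha b hb hab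
          exact Prod.ext (hrow a ha b hb) hab
    _ = q := by simp
    _ ≤ max p q := le_max_right _ _
  · push_neg at hrow
    obtain ⟨a, ha, b, hb, hab⟩ := hrow
    have hsnd : ∀ x ∈ C, x.2 = a.2 := by
      intro x hx
      rcases h x hx a ha with h1 | h2
      · rcases h x hx b hb with h1' | h2'
        · exact absurd (h1.symm.trans h1') hab
        · have := (h a ha b hb).resolve_left hab
          exact h2'.trans this.symm
      · exact h2
    calc C.card ≤ (Finset.univ : Finset (Fin p)).card := by
          apply Finset.card_le_card_of_injOn Prod.fst (fun _ _ => Finset.mem_univ _)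
          intro x hx y hy hxy
          exact Prod.ext hxy ((hsnd x hx).trans (hsnd y hy).symm)
    _ = p := by simp
    _ ≤ max p q := le_max_left _ _

lemma lower_bound {p q k : ℕ} (hp : 2 ≤ p) (φ : Fin p × Fin q → Fin k)
    (hφ : ((⊤ : SimpleGraph (Fin p)).directProd (⊤ : SimpleGraph (Fin q))).IsStrongOddColoring φ) :
    min p q ≤ k := by
  obtain ⟨hproper, -⟩ := hφ
  have hsum : (Finset.univ : Finset (Fin p × Fin q)).card
      = ∑ c : Fin k, (Finset.univ.filter (fun x => φ x = c)).card :=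
    Finset.card_eq_sum_card_fiberwise (fun x _ => Finset.mem_univ _)
  have hfib : ∀ c : Fin k, (Finset.univ.filter (fun x => φ x = c)).card ≤ max p q := by
    intro c
    apply fiber_card_le
    intro a ha b hb
    simp only [Finset.mem_filter] at ha hb
    by_contra hcon
    push_neg at hcon
    have hadj : ((⊤ : SimpleGraph (Fin p)).directProd (⊤ : SimpleGraph (Fin q))).Adj a b :=
      ⟨hcon.1, hcon.2⟩
    exact hproper hadj (ha.2.trans hb.2.symm)
  have h1 : p * q ≤ k * max p q := by
    calc p * q = (Finset.univ : Finset (Fin p × Fin q)).card := by simp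
    _ = ∑ c : Fin k, (Finset.univ.filter (fun x => φ x = c)).card := hsum
    _ ≤ k * max p q := by
        simpa [smul_eq_mul] using Finset.sum_le_card_nsmul Finset.univ
          (fun c : Fin k => (Finset.univ.filter (fun x => φ x = c)).card) (max p q)
          (fun c _ => hfib c)
  have h2 : min p q * max p q ≤ k * max p q := by rwa [min_mul_max]
  exact Nat.le_of_mul_le_mul_right h2 (lt_of_lt_of_le (by omega) (le_max_left p q))

lemma upper_fst {p q : ℕ} (hq : 2 ≤ q) (hqe : Even q) :
    ((⊤ : SimpleGraph (Fin p)).directProd (⊤ : SimpleGraph (Fin q))).IsStrongOddColoring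
      (Prod.fst : Fin p × Fin q → Fin p) := by
  constructor
  · rintro u v ⟨h1, -⟩
    exact (SimpleGraph.top_adj _ _).mp h1
  · intro v c
    by_cases hc : c = v.1
    · left
      rw [Nat.card_eq_zero]
      left
      constructor
      rintro ⟨u, ⟨h1, -⟩, h2⟩
      exact (SimpleGraph.top_adj _ _).mp h1 (h2.trans hc).symm
    · right
      have e : {u : Fin p × Fin q //
          ((⊤ : SimpleGraph (Fin p)).directProd (⊤ : SimpleGraph (Fin q))).Adj v u ∧ u.1 = c}
          ≃ {j : Fin q // j ≠ v.2} :=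
        { toFun := fun u => ⟨u.1.2, fun h => (SimpleGraph.top_adj _ _).mp u.2.1.2 h.symm⟩
          invFun := fun j => ⟨(c, j.1),
            ⟨⟨(SimpleGraph.top_adj _ _).mpr (fun h => hc h.symm),
              (SimpleGraph.top_adj _ _).mpr (fun h => j.2 h.symm)⟩, rfl⟩⟩
          left_inv := by
            rintro ⟨⟨u1, u2⟩, ⟨-, h2⟩⟩
            exact Subtype.ext (Prod.ext h2.symm rfl)
          right_inv := fun j => rfl }
      rw [Nat.card_congr e, Nat.card_eq_fintype_card]
      have : Fintype.card {j : Fin q // j ≠ v.2} = q - 1 := by simp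
      rw [this]
      obtain ⟨m, hm⟩ := hqe
      refine ⟨m - 1, by omega⟩

lemma upper_snd {p q : ℕ} (hp : 2 ≤ p) (hpe : Even p) :
    ((⊤ : SimpleGraph (Fin p)).directProd (⊤ : SimpleGraph (Fin q))).IsStrongOddColoring
      (Prod.snd : Fin p × Fin q → Fin q) := by
  constructor
  · rintro u v ⟨-, h2⟩
    exact (SimpleGraph.top_adj _ _).mp h2
  · intro v c
    by_cases hc : c = v.2
    · left
      rw [Nat.card_eq_zero]
      left
      constructor
      rintro ⟨u, ⟨-, h1⟩, h2⟩
      exact (SimpleGraph.top_adj _ _).mp h1 (h2.trans hc).symm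
    · right
      have e : {u : Fin p × Fin q //
          ((⊤ : SimpleGraph (Fin p)).directProd (⊤ : SimpleGraph (Fin q))).Adj v u ∧ u.2 = c}
          ≃ {i : Fin p // i ≠ v.1} :=
        { toFun := fun u => ⟨u.1.1, fun h => (SimpleGraph.top_adj _ _).mp u.2.1.1 h.symm⟩
          invFun := fun i => ⟨(i.1, c),
            ⟨⟨(SimpleGraph.top_adj _ _).mpr (fun h => i.2 h.symm),
              (SimpleGraph.top_adj _ _).mpr (fun h => hc h.symm)⟩, rfl⟩⟩
          left_inv := by
            rintro ⟨⟨u1, u2⟩, ⟨-, h2⟩⟩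
            exact Subtype.ext (Prod.ext rfl h2.symm)
          right_inv := fun i => rfl }
      rw [Nat.card_congr e, Nat.card_eq_fintype_card]
      have : Fintype.card {i : Fin p // i ≠ v.1} = p - 1 := by simp
      rw [this]
      obtain ⟨m, hm⟩ := hpe
      refine ⟨m - 1, by omega⟩

/-- `χ_so(K_p × K_q) = min(p, q)` for even `p, q ≥ 2`. -/
theorem strongOddChromaticNumber_directProd_complete_even_even (p q : ℕ)
    (hp : 2 ≤ p) (hq : 2 ≤ q) (hpe : Even p) (hqe : Even q) :
    ((⊤ : SimpleGraph (Fin p)).directProd (⊤ : SimpleGraph (Fin q))).strongOddChromaticNumber =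
      min p q := by
  rw [SimpleGraph.strongOddChromaticNumber]
  have hmem : min p q ∈ {k | ∃ φ : Fin p × Fin q → Fin k,
      ((⊤ : SimpleGraph (Fin p)).directProd (⊤ : SimpleGraph (Fin q))).IsStrongOddColoring φ} := by
    rcases le_total p q with hle | hle
    · rw [min_eq_left hle]
      exact ⟨Prod.fst, upper_fst hq hqe⟩
    · rw [min_eq_right hle]
      exact ⟨Prod.snd, upper_snd hp hpe⟩
  refine le_antisymm (Nat.sInf_le hmem) (le_csInf ⟨_, hmem⟩ ?_)
  rintro k ⟨φ, hφ⟩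
  exact lower_bound hp φ hφ
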